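/- arXiv:1903.03442 — 2 statements merged into one kernel-verified Lean document; each statement's English description precedes it below -/
import Mathlib

section
/- Let Q₀, Q₁ ⊆ ℝⁿ₋ be nonempty closed convex sets complete with respect to ℝⁿ₋ (Q_j + ℝⁿ₋ ⊆ Q_j), with finite support functions on ℝⁿ₊. For t ∈ (0,1) and c₀, c₁ > 0, define g_t(a) = (1-t)·max(h_{Q₀}(a)+c₀, 0) + t·max(h_{Q₁}(a)+c₁, 0) for a ∈ ℝⁿ₊ (extended by +∞ off ℝⁿ₊), and let u_t = L[g_t] be its Legendre transform restricted to ℝⁿ₋. Then the set {s ∈ ℝⁿ₋ : u_t(s) ≤ -((1-t)c₀ + t c₁)} equals the Minkowski combination (1-t)Q₀ + tQ₁ (closure thereof). -/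
/-!
The sublevel set of `u` is cut out by the half-spaces `a ⬝ᵥ s ≤ G a - ((1 - t) c₀ + t c₁)`,
`a ≥ 0`, where `G` is the truncated combination defining `g`. Support functions are positively
homogeneous and `c₀, c₁ > 0`, so near the origin of every ray the truncations are inactive and
these constraints become `a ⬝ᵥ s ≤ (1 - t) h_{Q₀}(a) + t h_{Q₁}(a)`, the support function of
`S = (1 - t) • Q₀ + t • Q₁`. Since `S` is convex and stable under adding the nonpositive orthant,
Hahn–Banach separates any point outside `closure S` from `S` by a functional with nonnegative
coefficients, so `closure S` is exactly the intersection of these half-spaces.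
-/

open Pointwise

noncomputable def supp {n : ℕ} (Q : Set (Fin n → ℝ)) (x : Fin n → ℝ) : ℝ :=
  sSup ((fun y => ∑ i, x i * y i) '' Q)

open Set Filter Topology

section OrderedModule

variable {E : Type*} [AddCommGroup E] [PartialOrder E] [Module ℝ E] [PosSMulMono ℝ E]

lemma smul_add_smul_subset_Iic [IsOrderedAddMonoid E] {Q₀ Q₁ : Set E} (h₀ : Q₀ ⊆ Iic 0)
    (h₁ : Q₁ ⊆ Iic 0) {α β : ℝ} (hα : 0 ≤ α) (hβ : 0 ≤ β) :
    α • Q₀ + β • Q₁ ⊆ Iic 0 := by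
  rintro _ ⟨_, ⟨y₀, hy₀, rfl⟩, _, ⟨y₁, hy₁, rfl⟩, rfl⟩
  exact add_nonpos (smul_nonpos_of_nonneg_of_nonpos hα (mem_Iic.1 (h₀ hy₀)))
    (smul_nonpos_of_nonneg_of_nonpos hβ (mem_Iic.1 (h₁ hy₁)))

lemma smul_add_smul_add_Iic_subset {Q₀ : Set E} (h₀ : Q₀ + Iic 0 ⊆ Q₀) (Q₁ : Set E)
    {α : ℝ} (hα : 0 < α) (β : ℝ) :
    α • Q₀ + β • Q₁ + Iic 0 ⊆ α • Q₀ + β • Q₁ := by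
  rw [add_right_comm]
  refine add_subset_add_right ?_
  rintro _ ⟨_, ⟨y, hy, rfl⟩, w, hw, rfl⟩
  refine ⟨y + α⁻¹ • w, h₀ ⟨y, hy, α⁻¹ • w,
    mem_Iic.2 (smul_nonpos_of_nonneg_of_nonpos (inv_nonneg.2 hα.le) hw), rfl⟩, ?_⟩
  simp only [smul_add, smul_inv_smul₀ hα.ne']

end OrderedModule

section DotProduct

variable {ι : Type*} [Fintype ι]

lemma image_dotProduct_smul_add_smul (a : ι → ℝ) (α β : ℝ) (Q₀ Q₁ : Set (ι → ℝ)) :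
    (a ⬝ᵥ ·) '' (α • Q₀ + β • Q₁) = α • (a ⬝ᵥ ·) '' Q₀ + β • (a ⬝ᵥ ·) '' Q₁ := by
  change ⇑(dotProductBilin ℝ ℝ a) '' _ =
    α • ⇑(dotProductBilin ℝ ℝ a) '' Q₀ + β • ⇑(dotProductBilin ℝ ℝ a) '' Q₁
  rw [image_add, image_smul_set, image_smul_set]

lemma bddAbove_image_dotProduct_smul_add_smul {a : ι → ℝ} {Q₀ Q₁ : Set (ι → ℝ)}
    (h₀ : BddAbove ((a ⬝ᵥ ·) '' Q₀)) (h₁ : BddAbove ((a ⬝ᵥ ·) '' Q₁)) {α β : ℝ}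
    (hα : 0 ≤ α) (hβ : 0 ≤ β) :
    BddAbove ((a ⬝ᵥ ·) '' (α • Q₀ + β • Q₁)) := by
  rw [image_dotProduct_smul_add_smul]
  exact (h₀.smul_of_nonneg hα).add (h₁.smul_of_nonneg hβ)

lemma exists_nonneg_dotProduct_lt_of_notMem_closure {C : Set (ι → ℝ)} (hne : C.Nonempty)
    (hcv : Convex ℝ C) (hrec : C + Iic 0 ⊆ C) {s : ι → ℝ} (hs : s ∉ closure C) :
    ∃ a, 0 ≤ a ∧ ∃ r, (∀ z ∈ C, a ⬝ᵥ z < r) ∧ r < a ⬝ᵥ s := by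
  classical
  obtain ⟨f, r, hfC, hfs⟩ := geometric_hahn_banach_closed_point hcv.closure isClosed_closure hs
  set a : ι → ℝ := fun i => f (Pi.single i 1)
  have hf : ∀ x, f x = a ⬝ᵥ x := fun x => by
    conv_lhs => rw [pi_eq_sum_univ' x]
    simp [a, dotProduct, mul_comm]
  have hC : ∀ z ∈ C, a ⬝ᵥ z < r := fun z hz => hf z ▸ hfC z (subset_closure hz)
  refine ⟨a, fun i => ?_, r, hC, hf s ▸ hfs⟩
  obtain ⟨z, hz⟩ := hne
  by_contra! hai
  -- a negative weight `a i` makes `-eᵢ` a recession direction of `C` along which `a ⬝ᵥ ·`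
  -- increases; a step of the right length already reaches `r`
  have hR : (r - a ⬝ᵥ z) / a i ≤ 0 :=
    div_nonpos_of_nonneg_of_nonpos (sub_nonneg.2 (hC z hz).le) hai.le
  have := hC _ (hrec ⟨z, hz, Pi.single i _, Pi.single_nonpos.2 hR, rfl⟩)
  rw [dotProduct_add, dotProduct_single, mul_div_cancel₀ _ hai.ne] at this
  linarith

end DotProduct

section SupportFunction

variable {n : ℕ}

lemma le_supp {Q : Set (Fin n → ℝ)} {a : Fin n → ℝ} (hbdd : BddAbove ((a ⬝ᵥ ·) '' Q))
    {y : Fin n → ℝ} (hy : y ∈ Q) :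
    a ⬝ᵥ y ≤ supp Q a :=
  le_csSup hbdd (mem_image_of_mem _ hy)

lemma supp_smul (Q : Set (Fin n → ℝ)) {l : ℝ} (hl : 0 ≤ l) (a : Fin n → ℝ) :
    supp Q (l • a) = l * supp Q a := by
  change sSup ((fun y => (l • a) ⬝ᵥ y) '' Q) = l * sSup ((a ⬝ᵥ ·) '' Q)
  simp_rw [smul_dotProduct, ← image_image (l • ·) (a ⬝ᵥ ·), image_smul,
    Real.sSup_smul_of_nonneg hl, smul_eq_mul]

lemma supp_smul_add_smul {Q₀ Q₁ : Set (Fin n → ℝ)} (hne₀ : Q₀.Nonempty) (hne₁ : Q₁.Nonempty)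
    {a : Fin n → ℝ} (hbdd₀ : BddAbove ((a ⬝ᵥ ·) '' Q₀)) (hbdd₁ : BddAbove ((a ⬝ᵥ ·) '' Q₁))
    {α β : ℝ} (hα : 0 ≤ α) (hβ : 0 ≤ β) :
    supp (α • Q₀ + β • Q₁) a = α * supp Q₀ a + β * supp Q₁ a := by
  change sSup ((a ⬝ᵥ ·) '' _) = α * sSup ((a ⬝ᵥ ·) '' Q₀) + β * sSup ((a ⬝ᵥ ·) '' Q₁)
  rw [image_dotProduct_smul_add_smul, csSup_add ((hne₀.image _).smul_set)
    (hbdd₀.smul_of_nonneg hα) ((hne₁.image _).smul_set) (hbdd₁.smul_of_nonneg hβ),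
    Real.sSup_smul_of_nonneg hα, Real.sSup_smul_of_nonneg hβ, smul_eq_mul, smul_eq_mul]

theorem closure_eq_setOf_dotProduct_le_supp {C : Set (Fin n → ℝ)} (hne : C.Nonempty)
    (hcv : Convex ℝ C) (hneg : C ⊆ Iic 0) (hrec : C + Iic 0 ⊆ C)
    (hbdd : ∀ a, 0 ≤ a → BddAbove ((a ⬝ᵥ ·) '' C)) :
    closure C = {s | s ≤ 0 ∧ ∀ a, 0 ≤ a → a ⬝ᵥ s ≤ supp C a} := by
  refine Subset.antisymm (closure_minimal
    (fun z hz => ⟨hneg hz, fun a ha => le_supp (hbdd a ha) hz⟩) ?_) ?_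
  · simp only [ofPred_and, ofPred_forall]
    exact (isClosed_le continuous_id continuous_const).inter (isClosed_iInter fun a =>
      isClosed_iInter fun _ => isClosed_le (continuous_const.dotProduct continuous_id)
        continuous_const)
  · rintro s ⟨-, hs⟩
    by_contra hsC
    obtain ⟨a, ha, r, hC, hr⟩ := exists_nonneg_dotProduct_lt_of_notMem_closure hne hcv hrec hsC
    have : supp C a ≤ r := csSup_le (hne.image _) (forall_mem_image.2 fun z hz => (hC z hz).le)
    linarith [hs a ha]

end SupportFunction

lemma iSup_coe_sub_le_coe_iff {α : Type*} {P : Set α} [DecidablePred (· ∈ P)] {G : α → ℝ}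
    {g : α → EReal} (hg : ∀ a, g a = if a ∈ P then (G a : EReal) else ⊤) (φ : α → ℝ) (m : ℝ) :
    (⨆ a, (φ a : EReal) - g a) ≤ m ↔ ∀ a ∈ P, φ a - G a ≤ m := by
  refine iSup_le_iff.trans (forall_congr' fun a => ?_)
  by_cases ha : a ∈ P
  · simp [hg, ha, ← EReal.coe_sub]
  · simp [hg, ha]

lemma forall_dotProduct_sub_max_le_iff {ι : Type*} [Fintype ι] (s : ι → ℝ)
    {H₀ H₁ : (ι → ℝ) → ℝ} (hH₀ : ∀ l : ℝ, 0 ≤ l → ∀ a, H₀ (l • a) = l * H₀ a)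
    (hH₁ : ∀ l : ℝ, 0 ≤ l → ∀ a, H₁ (l • a) = l * H₁ a) {α β c₀ c₁ : ℝ} (hα : 0 ≤ α)
    (hβ : 0 ≤ β) (hc₀ : 0 < c₀) (hc₁ : 0 < c₁) :
    (∀ a, 0 ≤ a → a ⬝ᵥ s - (α * max (H₀ a + c₀) 0 + β * max (H₁ a + c₁) 0)
        ≤ -(α * c₀ + β * c₁)) ↔
      ∀ a, 0 ≤ a → a ⬝ᵥ s ≤ α * H₀ a + β * H₁ a := by
  refine ⟨fun h a ha => ?_, fun h a ha => ?_⟩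
  · -- close to the origin on the ray through `a` both truncations are inactive
    have hev : ∀ {x c : ℝ}, 0 < c → ∀ᶠ l in 𝓝[>] (0 : ℝ), 0 ≤ l * x + c := fun hc =>
      nhdsWithin_le_nhds (((continuous_id.mul continuous_const).add continuous_const).tendsto'
        0 _ (by simp) |>.eventually (eventually_ge_nhds hc))
    obtain ⟨l, ⟨h₀, h₁⟩, hl⟩ := ((hev hc₀).and (hev hc₁)).and self_mem_nhdsWithin |>.exists
    have := h (l • a) (smul_nonneg hl.le ha)
    rw [hH₀ l hl.le, hH₁ l hl.le, max_eq_left h₀, max_eq_left h₁,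
      smul_dotProduct, smul_eq_mul] at this
    exact le_of_mul_le_mul_left (by linarith) hl
  · nlinarith [h a ha, mul_le_mul_of_nonneg_left (le_max_left (H₀ a + c₀) 0) hα,
      mul_le_mul_of_nonneg_left (le_max_left (H₁ a + c₁) 0) hβ]

theorem stmt13_general (n : ℕ) (Q₀ Q₁ : Set (Fin n → ℝ))
    (hQ₀ : Q₀.Nonempty) (hQ₁ : Q₁.Nonempty)
    (hQ₀sub : Q₀ ⊆ {s | ∀ i, s i ≤ 0}) (hQ₁sub : Q₁ ⊆ {s | ∀ i, s i ≤ 0})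
    (hQ₀cv : Convex ℝ Q₀) (hQ₁cv : Convex ℝ Q₁)
    (hQ₀comp : Q₀ + {s : Fin n → ℝ | ∀ i, s i ≤ 0} ⊆ Q₀)
    (hfin₀ : ∀ a ∈ {x : Fin n → ℝ | ∀ i, 0 ≤ x i}, BddAbove ((fun y => ∑ i, a i * y i) '' Q₀))
    (hfin₁ : ∀ a ∈ {x : Fin n → ℝ | ∀ i, 0 ≤ x i}, BddAbove ((fun y => ∑ i, a i * y i) '' Q₁))
    (t : ℝ) (ht : t ∈ Set.Ioo (0:ℝ) 1) (c₀ c₁ : ℝ) (hc₀ : 0 < c₀) (hc₁ : 0 < c₁)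
    (g : (Fin n → ℝ) → EReal)
    (hg : ∀ a : Fin n → ℝ, g a =
      if a ∈ {x : Fin n → ℝ | ∀ i, 0 ≤ x i} then
        (((1 - t) * max (supp Q₀ a + c₀) 0 + t * max (supp Q₁ a + c₁) 0 : ℝ) : EReal)
      else ⊤)
    (u : (Fin n → ℝ) → EReal)
    (hu : ∀ s : Fin n → ℝ, u s = ⨆ a : Fin n → ℝ, (((∑ i, a i * s i : ℝ) : EReal) - g a)) :
    {s ∈ {s : Fin n → ℝ | ∀ i, s i ≤ 0} | u s ≤ ((-((1 - t) * c₀ + t * c₁) : ℝ) : EReal)} =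
      closure ((1 - t) • Q₀ + t • Q₁) := by
  obtain ⟨ht₀, ht₁⟩ := ht
  have h1t : 0 ≤ 1 - t := sub_nonneg.2 ht₁.le
  rw [closure_eq_setOf_dotProduct_le_supp (hQ₀.smul_set.add hQ₁.smul_set)
    ((hQ₀cv.smul _).add (hQ₁cv.smul _)) (smul_add_smul_subset_Iic hQ₀sub hQ₁sub h1t ht₀.le)
    (smul_add_smul_add_Iic_subset hQ₀comp Q₁ (sub_pos.2 ht₁) t)
    fun a ha => bddAbove_image_dotProduct_smul_add_smul (hfin₀ a ha) (hfin₁ a ha) h1t ht₀.le]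
  ext s
  refine and_congr_right fun _ => ?_
  rw [hu s]
  refine (iSup_coe_sub_le_coe_iff hg (· ⬝ᵥ s) _).trans ?_
  refine (forall_dotProduct_sub_max_le_iff s (fun _ => supp_smul Q₀) (fun _ => supp_smul Q₁)
    h1t ht₀.le hc₀ hc₁).trans (forall₂_congr fun a ha => ?_)
  rw [supp_smul_add_smul hQ₀ hQ₁ (hfin₀ a ha) (hfin₁ a ha) h1t ht₀.le]

theorem stmt13 (n : ℕ) (Q₀ Q₁ : Set (Fin n → ℝ))
    (hQ₀ : Q₀.Nonempty) (hQ₁ : Q₁.Nonempty)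
    (hQ₀sub : Q₀ ⊆ {s | ∀ i, s i ≤ 0}) (hQ₁sub : Q₁ ⊆ {s | ∀ i, s i ≤ 0})
    (hQ₀cl : IsClosed Q₀) (hQ₁cl : IsClosed Q₁)
    (hQ₀cv : Convex ℝ Q₀) (hQ₁cv : Convex ℝ Q₁)
    (hQ₀comp : Q₀ + {s : Fin n → ℝ | ∀ i, s i ≤ 0} ⊆ Q₀)
    (hQ₁comp : Q₁ + {s : Fin n → ℝ | ∀ i, s i ≤ 0} ⊆ Q₁)
    (hfin₀ : ∀ a ∈ {x : Fin n → ℝ | ∀ i, 0 ≤ x i}, BddAbove ((fun y => ∑ i, a i * y i) '' Q₀))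
    (hfin₁ : ∀ a ∈ {x : Fin n → ℝ | ∀ i, 0 ≤ x i}, BddAbove ((fun y => ∑ i, a i * y i) '' Q₁))
    (t : ℝ) (ht : t ∈ Set.Ioo (0:ℝ) 1) (c₀ c₁ : ℝ) (hc₀ : 0 < c₀) (hc₁ : 0 < c₁)
    (g : (Fin n → ℝ) → EReal)
    (hg : ∀ a : Fin n → ℝ, g a =
      if a ∈ {x : Fin n → ℝ | ∀ i, 0 ≤ x i} then
        (((1 - t) * max (supp Q₀ a + c₀) 0 + t * max (supp Q₁ a + c₁) 0 : ℝ) : EReal)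
      else ⊤)
    (u : (Fin n → ℝ) → EReal)
    (hu : ∀ s : Fin n → ℝ, u s = ⨆ a : Fin n → ℝ, (((∑ i, a i * s i : ℝ) : EReal) - g a)) :
    {s ∈ {s : Fin n → ℝ | ∀ i, s i ≤ 0} | u s ≤ ((-((1 - t) * c₀ + t * c₁) : ℝ) : EReal)} =
      closure ((1 - t) • Q₀ + t • Q₁) :=
  stmt13_general n Q₀ Q₁ hQ₀ hQ₁ hQ₀sub hQ₁sub hQ₀cv hQ₁cv hQ₀comp hfin₀ hfin₁ t ht c₀ c₁ hc₀ hc₁ g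
    hg u hu
end

section
/- Let Q ⊆ ℝⁿ₋ be a nonempty closed convex set with Q + ℝⁿ₋ ⊆ Q, whose support function h_Q is finite on ℝⁿ₊ and satisfies h_Q(a) < 0 for a in the interior of ℝⁿ₊. Then (Q°)° = Q, i.e., the copolar is an involution on such sets. -/
open Pointwise

def copolar {n : ℕ} (Q : Set (Fin n → ℝ)) : Set (Fin n → ℝ) :=
  {x | ∀ y ∈ Q, ∑ i, x i * y i ≤ -1}

theorem stmt14 (n : ℕ) (Q : Set (Fin n → ℝ)) (hQ : Q.Nonempty)
    (hQsub : Q ⊆ {s | ∀ i, s i ≤ 0})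
    (hQcl : IsClosed Q) (hQcv : Convex ℝ Q)
    (hQcomp : Q + {s : Fin n → ℝ | ∀ i, s i ≤ 0} ⊆ Q)
    (hfin : ∀ a ∈ {x : Fin n → ℝ | ∀ i, 0 ≤ x i}, BddAbove ((fun y => ∑ i, a i * y i) '' Q))
    (hneg : ∀ a ∈ {x : Fin n → ℝ | ∀ i, 0 < x i}, supp Q a < 0) :
    copolar (copolar Q) = Q := by
  have key : ∀ a : Fin n → ℝ, (∀ i, 0 ≤ a i) → ∀ y ∈ Q, ∑ i, a i * y i ≤ supp Q a := by
    intro a ha y hy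
    exact le_csSup (hfin a ha) ⟨y, hy, rfl⟩
  have suple : ∀ (a : Fin n → ℝ) (c : ℝ), (∀ y ∈ Q, ∑ i, a i * y i ≤ c) → supp Q a ≤ c := by
    intro a c h
    exact csSup_le (hQ.image _) (by rintro _ ⟨y, hy, rfl⟩; exact h y hy)
  apply Set.Subset.antisymm
  · intro x hx
    by_contra hxQ
    obtain ⟨f, u, hfu, hux⟩ := geometric_hahn_banach_closed_point hQcv hQcl hxQ
    set a : Fin n → ℝ := fun i => f (Pi.single i 1) with ha
    have hfa : ∀ y : Fin n → ℝ, f y = ∑ i, a i * y i := by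
      intro y
      conv_lhs => rw [pi_eq_sum_univ y]
      rw [map_sum]
      refine Finset.sum_congr rfl fun i _ => ?_
      have hfun : (fun j => if i = j then (1:ℝ) else 0) = Pi.single i 1 := by
        ext j; simp [Pi.single_apply, eq_comm]
      rw [map_smul, hfun]
      simp [ha, mul_comm]
    -- a is nonnegative
    have hanng : ∀ j, 0 ≤ a j := by
      intro j
      by_contra h
      push_neg at h
      obtain ⟨y₀, hy₀⟩ := hQ
      set M : ℝ := (u - f y₀ + 1) / (-a j) with hM
      have hMpos : 0 < M := div_pos (by linarith [hfu y₀ hy₀]) (by linarith)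
      set w : Fin n → ℝ := (-M) • (Pi.single j (1:ℝ) : Fin n → ℝ) with hw
      have hmem : y₀ + w ∈ Q := by
        apply hQcomp
        refine Set.add_mem_add hy₀ ?_
        intro i
        by_cases hij : i = j
        · subst hij
          simp only [hw, Pi.smul_apply, Pi.single_eq_same, smul_eq_mul, mul_one]
          linarith
        · simp [hw, Pi.single_apply, hij]
      have hval : f (y₀ + w) = f y₀ + (-M) * a j := by
        rw [map_add, hw, map_smul]; simp [ha]
      have hMa : (-M) * a j = u - f y₀ + 1 := by
        have hne : -a j ≠ 0 := ne_of_gt (by linarith)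
        calc (-M) * a j = M * (-a j) := by ring
          _ = u - f y₀ + 1 := by rw [hM]; exact div_mul_cancel₀ _ hne
      have := hfu _ hmem
      rw [hval, hMa] at this
      linarith
    have hsu : supp Q a ≤ u := by
      refine suple a u fun y hy => ?_
      rw [← hfa y]; exact (hfu y hy).le
    have hLx : u < ∑ i, a i * x i := by rw [← hfa x]; exact hux
    -- perturb a to a strictly positive a'
    have hs₁ : supp Q (fun _ => (1:ℝ)) < 0 := hneg _ (fun i => one_pos)
    set s₁ : ℝ := supp Q (fun _ => (1:ℝ)) with hs₁def
    set s : ℝ := supp Q a with hsdef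
    set Lx : ℝ := ∑ i, a i * x i with hLxdef
    set X : ℝ := ∑ i, x i with hXdef
    set d : ℝ := Lx - s with hddef
    have hd : 0 < d := by simp only [hddef]; linarith
    set c : ℝ := |s₁ - X| + 1 with hcdef
    have hc : 0 < c := by positivity
    set ε : ℝ := d / (2 * c) with hεdef
    have hε : 0 < ε := by positivity
    set a' : Fin n → ℝ := fun i => a i + ε with ha'
    have ha'pos : ∀ i, 0 < a' i := fun i => add_pos_of_nonneg_of_pos (hanng i) hε
    have hexp : ∀ y : Fin n → ℝ, ∑ i, a' i * y i = (∑ i, a i * y i) + ε * ∑ i, y i := by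
      intro y
      simp only [ha', add_mul, Finset.sum_add_distrib, Finset.mul_sum]
    have hone : ∀ y ∈ Q, ∑ i, y i ≤ s₁ := by
      intro y hy
      have := key (fun _ => (1:ℝ)) (fun _ => zero_le_one) y hy
      simpa using this
    have hs'le : supp Q a' ≤ s + ε * s₁ := by
      refine suple a' _ fun y hy => ?_
      rw [hexp y]
      have h1 : ∑ i, a i * y i ≤ s := key a hanng y hy
      have h2 : ε * ∑ i, y i ≤ ε * s₁ := mul_le_mul_of_nonneg_left (hone y hy) hε.le
      linarith
    set s' : ℝ := supp Q a' with hs'def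
    have hs'neg : s' < 0 := hneg a' ha'pos
    -- s' < ∑ a' i * x i
    have habs : s₁ - X ≤ c := by
      have := le_abs_self (s₁ - X)
      simp only [hcdef]; linarith
    have hεc : ε * c = d / 2 := by
      rw [hεdef]; field_simp
    have h1 : ε * (s₁ - X) ≤ ε * c := mul_le_mul_of_nonneg_left habs hε.le
    clear_value s' a' ε c d
    have h1' : ε * s₁ - ε * X ≤ d / 2 := by
      have h2 : ε * (s₁ - X) ≤ d / 2 := hεc ▸ h1
      linarith [mul_sub ε s₁ X]
    set L' : ℝ := ∑ i, a' i * x i with hL'def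
    have hL'eq : L' = Lx + ε * X := by rw [hL'def, hexp x]
    have hs'lt : s' < L' := by
      have : s + ε * s₁ < Lx + ε * X := by
        simp only [hddef] at hd h1' ⊢
        linarith
      rw [hL'eq]; linarith
    -- choose t with s' < t < min 0 L'
    set t : ℝ := (s' + min 0 L') / 2 with htdef
    have hmin : s' < min 0 L' := lt_min hs'neg hs'lt
    have hst : s' < t := by rw [htdef]; linarith
    have htneg : t < 0 := by
      have := min_le_left (0:ℝ) L'
      rw [htdef]; linarith
    have htL : t < L' := by
      have := min_le_right (0:ℝ) L'
      rw [htdef]; linarith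
    have hnt : 0 < -t := by linarith
    -- build the copolar element
    set z : Fin n → ℝ := fun i => a' i / (-t) with hz
    have hzmem : z ∈ copolar Q := by
      intro y hy
      have h1 : ∑ i, a' i * y i ≤ s' := by
        rw [hs'def]; exact key a' (fun i => (ha'pos i).le) y hy
      have hsum : ∑ i, z i * y i = (∑ i, a' i * y i) / (-t) := by
        rw [Finset.sum_div]
        refine Finset.sum_congr rfl fun i _ => ?_
        rw [hz]; ring
      rw [hsum, div_le_iff₀ hnt]
      linarith
    have hcontr := hx z hzmem
    have hsum2 : ∑ i, x i * z i = L' / (-t) := by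
      rw [hL'def, Finset.sum_div]
      refine Finset.sum_congr rfl fun i _ => ?_
      rw [hz]; ring
    rw [hsum2, div_le_iff₀ hnt] at hcontr
    linarith
  · intro y hy z hz
    have := hz y hy
    calc ∑ i, y i * z i = ∑ i, z i * y i := by
          exact Finset.sum_congr rfl fun i _ => mul_comm _ _
      _ ≤ -1 := this
end
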